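/- arXiv:2106.03354 — 5 statements merged into one kernel-verified Lean document; each statement's English description precedes it below -/
import Mathlib

section
/- Let d ≥ 1 and let ρ be a probability density on ℝ^d with finite variance. Fix x in the interior of the support of ρ (so ρ(x) > 0), assume ρ is continuous at x, and let X_0,…,X_n be i.i.d. with density ρ (n ≥ 1). Then for every real β ≤ −1, the moment E[w_0(x)^β] of the Hilbert kernel weight w_0(x) = ‖x−X_0‖^{−d} / Σ_{j=0}^n ‖x−X_j‖^{−d} is infinite. -/
/-!
Since `w₀ ≤ 1` and `β ≤ -1`, `w₀ ^ β ≥ w₀⁻¹ = ∑ⱼ ‖x - Xⱼ‖⁻ᵈ / ‖x - X₀‖⁻ᵈ ≥ ‖x - X₀‖ᵈ ‖x - X₁‖⁻ᵈ`.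
On a ball `B(x, ε)` where `ρ > ρ(x) / 2`, the integrand therefore dominates a product of
functions of the single samples, so by Tonelli the moment is at least a positive constant times
`∫_B ‖x - y‖ᵈ dy · ∫_B ‖x - y‖⁻ᵈ dy · vol(B)ⁿ⁻¹`. In polar coordinates the middle factor is
`∫₀^ε r⁻¹ dr = ∞`, and the other factors are positive.
-/

open MeasureTheory Filter

noncomputable section

/-- Euclidean space `ℝ^d`. -/
abbrev Euc (d : ℕ) : Type := EuclideanSpace ℝ (Fin d)

/-- The Hilbert kernel weight `w_i(x) = ‖x−x_i‖^{−d} / Σ_j ‖x−x_j‖^{−d}`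
for sample points `xs : Fin (n+1) → ℝ^d`. -/
def hilbertWeight (d n : ℕ) (x : Euc d) (xs : Fin (n + 1) → Euc d) (i : Fin (n + 1)) : ℝ :=
  ‖x - xs i‖ ^ (-(d : ℝ)) / ∑ j : Fin (n + 1), ‖x - xs j‖ ^ (-(d : ℝ))

/-- The volume `V_d = π^{d/2}/Γ(d/2+1)` of the unit ball in `ℝ^d`. -/
def unitBallVol (d : ℕ) : ℝ := Real.pi ^ ((d : ℝ) / 2) / Real.Gamma ((d : ℝ) / 2 + 1)

open Metric Set ENNReal Module

theorem div_le_rpow_div_sum {ι : Type*} [Fintype ι] {a : ι → ℝ} (ha : ∀ k, 0 ≤ a k) (i j : ι)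
    {β : ℝ} (hβ : β ≤ -1) : a j / a i ≤ (a i / ∑ k, a k) ^ β := by
  rcases (ha i).eq_or_lt with h0 | hpos
  · -- the left side is the junk value `a j / 0 = 0`
    rw [← h0, zero_div]
    exact (div_zero (a j)).trans_le (Real.rpow_nonneg le_rfl β)
  have hle : ∀ k, a k ≤ ∑ k, a k := fun k =>
    Finset.single_le_sum (fun k _ => ha k) (Finset.mem_univ k)
  have hsum : 0 < ∑ k, a k := hpos.trans_le (hle i)
  calc a j / a i ≤ (∑ k, a k) / a i := div_le_div_of_nonneg_right (hle j) hpos.le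
    _ = (a i / ∑ k, a k) ^ (-1 : ℝ) := by rw [Real.rpow_neg_one, inv_div]
    _ ≤ (a i / ∑ k, a k) ^ β :=
      Real.rpow_le_rpow_of_exponent_ge (div_pos hpos hsum) (div_le_one_of_le₀ (hle i) hsum.le) hβ

theorem lintegral_fin_nat_prod_eq_prod {α : Type*} [MeasurableSpace α] {n : ℕ}
    {μ : Fin n → Measure α} [∀ i, SigmaFinite (μ i)] {f : Fin n → α → ℝ≥0∞}
    (hf : ∀ i, Measurable (f i)) :
    ∫⁻ x, ∏ i, f i (x i) ∂(Measure.pi μ) = ∏ i, ∫⁻ y, f i y ∂(μ i) := by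
  induction n with
  | zero => simp
  | succ n ih =>
    calc
      _ = ∫⁻ x : α × (Fin n → α), f 0 x.1 * ∏ i : Fin n, f i.succ (x.2 i)
          ∂((μ 0).prod (Measure.pi fun i ↦ μ i.succ)) := by
        rw [← ((measurePreserving_piFinSuccAbove μ 0).symm).lintegral_comp_emb
          (MeasurableEquiv.measurableEmbedding _)]
        simp_rw [MeasurableEquiv.piFinSuccAbove_symm_apply, Fin.insertNthEquiv,
          Fin.prod_univ_succ, Fin.insertNth_zero, Equiv.coe_fn_mk, Fin.cons_succ,
          Fin.zero_succAbove, cast_eq, Fin.cons_zero]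
      _ = (∫⁻ y, f 0 y ∂μ 0) * ∏ i : Fin n, ∫⁻ y, f i.succ y ∂(μ i.succ) := by
        have hg : Measurable fun y : Fin n → α => ∏ i, f i.succ (y i) :=
          Finset.measurable_prod _ fun i _ => (hf i.succ).comp (measurable_pi_apply i)
        rw [lintegral_prod_mul (hf 0).aemeasurable hg.aemeasurable, ih fun i => hf i.succ]
      _ = ∏ i, ∫⁻ y, f i y ∂(μ i) := (Fin.prod_univ_succ fun i => ∫⁻ y, f i y ∂(μ i)).symm

section NormRpow

variable {E : Type*} [NormedAddCommGroup E] [NormedSpace ℝ E] [FiniteDimensional ℝ E]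
  [MeasurableSpace E] [BorelSpace E] [Nontrivial E] (μ : Measure E) [μ.IsAddHaarMeasure]

theorem setLIntegral_norm_rpow_ball_pos (p : ℝ) {r : ℝ} (hr : 0 < r) :
    0 < ∫⁻ z in ball (0 : E) r, ENNReal.ofReal (‖z‖ ^ p) ∂μ := by
  rw [setLIntegral_pos_iff (by fun_prop)]
  calc 0 < μ (ball 0 r) := measure_ball_pos μ 0 hr
    _ = μ (ball 0 r \ {0}) := (measure_sdiff_null (measure_singleton 0)).symm
    _ ≤ μ (Function.support (fun z : E => ENNReal.ofReal (‖z‖ ^ p)) ∩ ball 0 r) := by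
      refine measure_mono fun z ⟨hz, hz0⟩ => ⟨?_, hz⟩
      simpa using Real.rpow_pos_of_pos (norm_pos_iff.2 hz0) p

theorem setLIntegral_norm_rpow_ball_eq_top {p : ℝ} (hp : p ≤ -finrank ℝ E) {r : ℝ} (hr : 0 < r) :
    ∫⁻ z in ball (0 : E) r, ENNReal.ofReal (‖z‖ ^ p) ∂μ = ⊤ := by
  by_contra hfin
  have hint : IntegrableOn (fun z : E => ‖z‖ ^ p) (ball 0 r) μ :=
    ⟨(measurable_norm.pow_const p).aestronglyMeasurable,
      (hasFiniteIntegral_iff_ofReal (ae_of_all _ fun z => by positivity)).2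
        (lt_top_iff_ne_top.2 hfin)⟩
  rw [integrableOn_fun_norm_addHaar μ (f := fun t => t ^ p)] at hint
  have hdim : 1 ≤ finrank ℝ E := finrank_pos
  have hpow : IntegrableOn (fun t : ℝ => t ^ ((finrank ℝ E : ℝ) - 1 + p)) (Ioo 0 r) := by
    refine hint.congr_fun (fun t ht => ?_) measurableSet_Ioo
    simp only [smul_eq_mul]
    rw [Real.rpow_add ht.1, ← Real.rpow_natCast, Nat.cast_sub hdim, Nat.cast_one]
  rw [intervalIntegral.integrableOn_Ioo_rpow_iff hr] at hpow
  linarith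

end NormRpow

theorem lintegral_prod_sub_left_eq_prod {G : Type*} [AddGroup G] [MeasurableSpace G]
    [MeasurableAdd G] [MeasurableNeg G] (μ : Measure G) [SigmaFinite μ] [μ.IsAddLeftInvariant]
    [μ.IsNegInvariant] {n : ℕ} {f : Fin n → G → ℝ≥0∞} (hf : ∀ i, Measurable (f i)) (x : G) :
    ∫⁻ xs, ∏ i, f i (x - xs i) ∂(Measure.pi fun _ => μ) = ∏ i, ∫⁻ y, f i y ∂μ := by
  rw [lintegral_fin_nat_prod_eq_prod (f := fun i y => f i (x - y))
    fun i => (hf i).comp (measurable_const_sub x)]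
  exact Finset.prod_congr rfl fun i _ => lintegral_sub_left_eq_self (f i) x

theorem rpow_mul_rpow_neg_le_hilbertWeight_rpow (d n : ℕ) (x : Euc d)
    (xs : Fin (n + 1) → Euc d) (i j : Fin (n + 1)) {β : ℝ} (hβ : β ≤ -1) :
    ‖x - xs i‖ ^ (d : ℝ) * ‖x - xs j‖ ^ (-(d : ℝ)) ≤ hilbertWeight d n x xs i ^ β :=
  calc ‖x - xs i‖ ^ (d : ℝ) * ‖x - xs j‖ ^ (-(d : ℝ))
      = ‖x - xs j‖ ^ (-(d : ℝ)) / ‖x - xs i‖ ^ (-(d : ℝ)) := by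
        rw [Real.rpow_neg (norm_nonneg (x - xs i)), div_inv_eq_mul, mul_comm]
    _ ≤ hilbertWeight d n x xs i ^ β :=
        div_le_rpow_div_sum (a := fun k => ‖x - xs k‖ ^ (-(d : ℝ))) (fun k => by positivity) i j hβ

def momentExponent (d m : ℕ) : Fin (m + 2) → ℝ := Fin.cons (d : ℝ) (Fin.cons (-(d : ℝ)) 0)

theorem prod_rpow_momentExponent (d m : ℕ) (t : Fin (m + 2) → ℝ) :
    ∏ i, t i ^ momentExponent d m i = t 0 ^ (d : ℝ) * t 1 ^ (-(d : ℝ)) := by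
  simp [Fin.prod_univ_succ, momentExponent]

theorem ofReal_pow_mul_prod_indicator_le_hilbert_integrand {d m : ℕ} {ρ : Euc d → ℝ} {x : Euc d}
    {c ε β : ℝ} (hc : 0 ≤ c) (hρ : ∀ y ∈ ball x ε, c < ρ y) (hβ : β ≤ -1)
    (xs : Fin (m + 2) → Euc d) :
    ENNReal.ofReal c ^ (m + 2) * ∏ i, (ball 0 ε).indicator
        (fun z => ENNReal.ofReal (‖z‖ ^ momentExponent d m i)) (x - xs i) ≤
      ENNReal.ofReal (hilbertWeight d (m + 1) x xs 0 ^ β * ∏ i, ρ (xs i)) := by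
  by_cases hall : ∀ i, xs i ∈ ball x ε
  · have hball : ∀ i, x - xs i ∈ ball (0 : Euc d) ε := fun i => by
      simpa [mem_ball, dist_eq_norm, norm_sub_rev] using hall i
    simp only [indicator_of_mem (hball _)]
    rw [← ofReal_pow hc, ← ofReal_prod_of_nonneg (fun i _ => by positivity),
      ← ofReal_mul (by positivity)]
    refine ofReal_le_ofReal ?_
    calc c ^ (m + 2) * ∏ i, ‖x - xs i‖ ^ momentExponent d m i
        = (∏ _i : Fin (m + 2), c) * (‖x - xs 0‖ ^ (d : ℝ) * ‖x - xs 1‖ ^ (-(d : ℝ))) := by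
          rw [Finset.prod_const, Finset.card_univ, Fintype.card_fin,
            prod_rpow_momentExponent d m fun i => ‖x - xs i‖]
      _ ≤ (∏ i, ρ (xs i)) * hilbertWeight d (m + 1) x xs 0 ^ β :=
          mul_le_mul (Finset.prod_le_prod (fun _ _ => hc) fun i _ => (hρ _ (hall i)).le)
            (rpow_mul_rpow_neg_le_hilbertWeight_rpow d (m + 1) x xs 0 1 hβ) (by positivity)
            (Finset.prod_nonneg fun i _ => hc.trans (hρ _ (hall i)).le)
      _ = _ := mul_comm _ _
  · obtain ⟨i, hi⟩ := not_forall.1 hall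
    have hi' : x - xs i ∉ ball (0 : Euc d) ε := by
      simpa [mem_ball, dist_eq_norm, norm_sub_rev] using hi
    rw [Finset.prod_eq_zero (Finset.mem_univ i) (indicator_of_notMem hi' _), mul_zero]
    exact zero_le

theorem hilbert_moment_infinite_beta_le_neg_one_general
    (d : ℕ) (hd : 1 ≤ d)
    (ρ : Euc d → ℝ)
    (x : Euc d) (hx : x ∈ interior {y | 0 < ρ y}) (hρ_cont : ContinuousAt ρ x)
    (n : ℕ) (hn : 1 ≤ n) (β : ℝ) (hβ : β ≤ -1) :
    ∫⁻ xs : Fin (n + 1) → Euc d,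
        ENNReal.ofReal (hilbertWeight d n x xs 0 ^ β * ∏ i : Fin (n + 1), ρ (xs i)) = ⊤ := by
  obtain ⟨m, rfl⟩ := Nat.exists_eq_add_of_le' hn
  have : Nonempty (Fin d) := ⟨⟨0, hd⟩⟩
  have hρx : 0 < ρ x := (interior_subset hx : x ∈ {y | 0 < ρ y})
  obtain ⟨ε, hε, hρ_ball⟩ : ∃ ε > 0, ∀ y ∈ ball x ε, ρ x / 2 < ρ y :=
    Metric.eventually_nhds_iff.1 (hρ_cont.eventually (lt_mem_nhds (half_lt_self hρx)))
  have hφ : ∀ i, Measurable ((ball (0 : Euc d) ε).indicator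
      fun z => ENNReal.ofReal (‖z‖ ^ momentExponent d m i)) :=
    fun i => Measurable.indicator (by fun_prop) measurableSet_ball
  have hprod : ∏ i, ∫⁻ z in ball (0 : Euc d) ε, ENNReal.ofReal (‖z‖ ^ momentExponent d m i) = ⊤ :=
    WithTop.prod_eq_top (Finset.mem_univ 1)
      (setLIntegral_norm_rpow_ball_eq_top volume (by simp [momentExponent]) hε)
      fun i _ => (setLIntegral_norm_rpow_ball_pos volume _ hε).ne'
  refine top_le_iff.1 ?_
  calc ⊤ = ENNReal.ofReal (ρ x / 2) ^ (m + 2) *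
        ∏ i, ∫⁻ z in ball (0 : Euc d) ε, ENNReal.ofReal (‖z‖ ^ momentExponent d m i) := by
        rw [hprod, mul_top (pow_ne_zero _ (ofReal_pos.2 (half_pos hρx)).ne')]
    _ = ∫⁻ xs : Fin (m + 2) → Euc d, ENNReal.ofReal (ρ x / 2) ^ (m + 2) * ∏ i, (ball 0 ε).indicator
        (fun z => ENNReal.ofReal (‖z‖ ^ momentExponent d m i)) (x - xs i) := by
        rw [lintegral_const_mul' _ _ (pow_ne_top ofReal_ne_top), volume_pi,
          lintegral_prod_sub_left_eq_prod volume hφ x]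
        simp only [lintegral_indicator measurableSet_ball]
    _ ≤ _ := lintegral_mono fun xs =>
        ofReal_pow_mul_prod_indicator_le_hilbert_integrand (half_pos hρx).le hρ_ball hβ xs

/-- for a probability density `ρ` on `ℝ^d` with finite variance, `x` in the
interior of the support of `ρ`, `ρ` continuous at `x`, `n ≥ 1` i.i.d. samples (plus `X_0`),
and any `β ≤ −1`, the β-th moment of the Hilbert kernel weight `w_0(x)` is infinite
(as a Lebesgue integral of the nonnegative integrand `w_0(x)^β·∏ ρ(x_i)`). -/
theorem hilbert_moment_infinite_beta_le_neg_one
    (d : ℕ) (hd : 1 ≤ d)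
    (ρ : Euc d → ℝ) (hρ_meas : Measurable ρ) (hρ_nonneg : ∀ y, 0 ≤ ρ y)
    (hρ_prob : (∫ y, ρ y) = 1)
    (hρ_var : Integrable (fun y => ρ y * ‖y‖ ^ 2))
    (x : Euc d) (hx : x ∈ interior {y | 0 < ρ y}) (hρ_cont : ContinuousAt ρ x)
    (n : ℕ) (hn : 1 ≤ n) (β : ℝ) (hβ : β ≤ -1) :
    ∫⁻ xs : Fin (n + 1) → Euc d,
        ENNReal.ofReal (hilbertWeight d n x xs 0 ^ β * ∏ i : Fin (n + 1), ρ (xs i)) = ⊤ :=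
  hilbert_moment_infinite_beta_le_neg_one_general d hd ρ x hx hρ_cont n hn β hβ

end
end

section
/- Let d ≥ 1 and let ρ be a probability density on ℝ^d with finite variance. Fix x in the interior of the support of ρ, assume ρ is continuous at x, and let X_0,…,X_n be i.i.d. with density ρ. For −1 < β < 0, define κ_β(x) = ∫ ρ(x+y)·‖y‖^{|β|d} d^d y and κ_{|β|}(x) = ∫ ρ(x+y)·‖y‖^{−|β|d} d^d y. If κ_β(x) < ∞, then the Hilbert kernel weight w_0(x) = ‖x−X_0‖^{−d} / Σ_{j=0}^n ‖x−X_j‖^{−d} satisfies E[w_0(x)^β] ≤ 1 + n·κ_{|β|}(x)·κ_β(x); in particular this moment is finite. -/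
/-!
Put `c = |β| d` and `r_j = ‖x - X_j‖`. Then `w_0 ^ β = (∑_j (r_0 / r_j) ^ d) ^ |β|`, and since
`t ↦ t ^ |β|` is subadditive for `|β| ≤ 1`, this is at most `1 + ∑_{j ≠ 0} r_j ^ (-c) r_0 ^ c`.
By independence each summand has expectation `κ_{|β|}(x) κ_β(x)`. The first factor is finite
because `c < d` makes `‖y‖ ^ (-c)` locally integrable while `ρ` is bounded near `x`.
-/

open MeasureTheory Filter

noncomputable section

theorem Real.rpow_sum_le_sum_rpow {ι : Type*} (s : Finset ι) {f : ι → ℝ} (hf : ∀ i ∈ s, 0 ≤ f i)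
    {p : ℝ} (hp0 : 0 < p) (hp1 : p ≤ 1) : (∑ i ∈ s, f i) ^ p ≤ ∑ i ∈ s, f i ^ p := by
  induction s using Finset.cons_induction with
  | empty => simp [Real.zero_rpow hp0.ne']
  | cons a s ha ih =>
    rw [Finset.forall_mem_cons] at hf
    rw [Finset.sum_cons, Finset.sum_cons]
    calc (f a + ∑ i ∈ s, f i) ^ p ≤ f a ^ p + (∑ i ∈ s, f i) ^ p :=
          Real.rpow_add_le_add_rpow hf.1 (Finset.sum_nonneg hf.2) hp0.le hp1
      _ ≤ f a ^ p + ∑ i ∈ s, f i ^ p := by gcongr; exact ih hf.2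

theorem prod_ite_mul_ite_mul {ι E : Type*} [Fintype ι] [DecidableEq ι] (ρ f g : E → ℝ) {i j : ι}
    (xs : ι → E) :
    ∏ k, (if k = i then f (xs k) else 1) * (if k = j then g (xs k) else 1) * ρ (xs k) =
      f (xs i) * g (xs j) * ∏ k, ρ (xs k) := by
  simp only [Finset.prod_mul_distrib, Finset.prod_ite_eq', Finset.mem_univ, if_true]

section PiProduct

variable {ι E : Type*} [Fintype ι] [MeasureSpace E] [SigmaFinite (volume : Measure E)]

theorem integrable_pi_prod {ρ : E → ℝ} (hρ : Integrable ρ) :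
    Integrable fun xs : ι → E => ∏ k, ρ (xs k) :=
  Integrable.fintype_prod (μ := fun _ => volume) fun _ => hρ

variable [DecidableEq ι]

theorem integrable_pi_mul_mul_prod {ρ f g : E → ℝ} (hρ : Integrable ρ)
    (hf : Integrable fun y => f y * ρ y) (hg : Integrable fun y => g y * ρ y)
    {i j : ι} (hij : i ≠ j) :
    Integrable fun xs : ι → E => f (xs i) * g (xs j) * ∏ k, ρ (xs k) := by
  simp_rw [← prod_ite_mul_ite_mul ρ f g]
  refine Integrable.fintype_prod (μ := fun _ => (volume : Measure E))
    (f := fun k y => (if k = i then f y else 1) * (if k = j then g y else 1) * ρ y) fun k => ?_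
  by_cases hki : k = i
  · subst hki; simpa [hij] using hf
  by_cases hkj : k = j
  · subst hkj; simpa [hki] using hg
  simpa [hki, hkj] using hρ

theorem integral_pi_mul_mul_prod {ρ f g : E → ℝ} (hρ : ∫ y, ρ y = 1) {i j : ι} (hij : i ≠ j) :
    ∫ xs : ι → E, f (xs i) * g (xs j) * ∏ k, ρ (xs k) =
      (∫ y, f y * ρ y) * ∫ y, g y * ρ y := by
  simp_rw [← prod_ite_mul_ite_mul ρ f g]
  rw [integral_fintype_prod_volume_eq_prod (E := fun _ => E)
    (fun k y => (if k = i then f y else 1) * (if k = j then g y else 1) * ρ y)]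
  have hfactor : ∀ k, ∫ y, (if k = i then f y else 1) * (if k = j then g y else 1) * ρ y =
      (if k = i then ∫ y, f y * ρ y else 1) * (if k = j then ∫ y, g y * ρ y else 1) := by
    intro k
    by_cases hki : k = i
    · subst hki; simp [hij]
    by_cases hkj : k = j
    · subst hkj; simp [hki]
    simp [hki, hkj, hρ]
  simp only [hfactor, Finset.prod_mul_distrib, Finset.prod_ite_eq', Finset.mem_univ, if_true]

variable {n : ℕ} {ρ f g : E → ℝ}

theorem integrable_one_add_sum_mul_prod (hρ : Integrable ρ) (hf : Integrable fun y => f y * ρ y)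
    (hg : Integrable fun y => g y * ρ y) (i : Fin (n + 1)) :
    Integrable fun xs : Fin (n + 1) → E =>
      (1 + ∑ j ∈ Finset.univ.erase i, f (xs j) * g (xs i)) * ∏ k, ρ (xs k) := by
  simp_rw [add_mul, one_mul, Finset.sum_mul]
  exact (integrable_pi_prod hρ).add
    (integrable_finsetSum _ fun j hj =>
      integrable_pi_mul_mul_prod hρ hf hg (Finset.ne_of_mem_erase hj))

theorem integral_one_add_sum_mul_prod (hρ : Integrable ρ) (hρ1 : ∫ y, ρ y = 1)
    (hf : Integrable fun y => f y * ρ y) (hg : Integrable fun y => g y * ρ y) (i : Fin (n + 1)) :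
    ∫ xs : Fin (n + 1) → E, (1 + ∑ j ∈ Finset.univ.erase i, f (xs j) * g (xs i)) *
        ∏ k, ρ (xs k) =
      1 + n * (∫ y, f y * ρ y) * ∫ y, g y * ρ y := by
  have hterm : ∀ j ∈ Finset.univ.erase i, Integrable fun xs : Fin (n + 1) → E =>
      f (xs j) * g (xs i) * ∏ k, ρ (xs k) := fun j hj =>
    integrable_pi_mul_mul_prod hρ hf hg (Finset.ne_of_mem_erase hj)
  simp_rw [add_mul, one_mul, Finset.sum_mul]
  rw [integral_add (integrable_pi_prod hρ) (integrable_finsetSum _ hterm),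
    integral_finsetSum _ hterm,
    integral_fintype_prod_volume_eq_pow, hρ1, one_pow,
    Finset.sum_congr rfl fun j hj => integral_pi_mul_mul_prod hρ1 (Finset.ne_of_mem_erase hj),
    Finset.sum_const, Finset.card_erase_of_mem (Finset.mem_univ _), Finset.card_univ,
    Fintype.card_fin, nsmul_eq_mul]
  push_cast
  ring

end PiProduct

section Translation

variable {E : Type*} [NormedAddCommGroup E] [MeasurableSpace E] [MeasurableAdd E] {μ : Measure E}
  [μ.IsAddLeftInvariant]

theorem integrable_norm_sub_rpow_mul {ρ : E → ℝ} {x : E} {s : ℝ}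
    (h : Integrable (fun y => ρ (x + y) * ‖y‖ ^ s) μ) :
    Integrable (fun y => ‖x - y‖ ^ s * ρ y) μ := by
  refine (h.comp_add_left (-x)).congr (Eventually.of_forall fun y => ?_)
  simp [mul_comm, neg_add_eq_sub, norm_sub_rev]

theorem integral_norm_sub_rpow_mul (ρ : E → ℝ) (x : E) (s : ℝ) :
    ∫ y, ‖x - y‖ ^ s * ρ y ∂μ = ∫ y, ρ (x + y) * ‖y‖ ^ s ∂μ := by
  rw [← integral_add_left_eq_self _ x]
  simp [mul_comm]

end Translation

section LocalIntegrability

open Metric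

variable {E : Type*} [NormedAddCommGroup E] [NormedSpace ℝ E] [FiniteDimensional ℝ E]
  [MeasurableSpace E] [BorelSpace E] {μ : Measure E} [μ.IsAddHaarMeasure]

theorem integrable_mul_norm_rpow_neg {g : E → ℝ} (hg : Integrable g μ) (hg0 : ContinuousAt g 0)
    (hE : 1 ≤ Module.finrank ℝ E) {c : ℝ} (hc0 : 0 ≤ c) (hcE : c < Module.finrank ℝ E) :
    Integrable (fun y => g y * ‖y‖ ^ (-c)) μ := by
  obtain ⟨ε, hε, hbound⟩ : ∃ ε > 0, ∀ y ∈ ball (0 : E) ε, ‖g y‖ < ‖g 0‖ + 1 :=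
    eventually_nhds_iff_ball.1 <| hg0.norm.eventually_lt_const (lt_add_one _)
  have hmeas : AEStronglyMeasurable (fun y => g y * ‖y‖ ^ (-c)) μ :=
    hg.aestronglyMeasurable.mul (measurable_norm.pow_const _).aestronglyMeasurable
  rw [← integrableOn_univ, ← Set.union_compl_self (ball 0 ε)]
  refine IntegrableOn.union ?_ ?_
  · refine integrableOn_ball_of_norm_le_rpow (C := ‖g 0‖ + 1) hE hcE ?_ hmeas
    refine (ae_restrict_iff' measurableSet_ball).2 (Eventually.of_forall fun y hy => ?_)
    rw [norm_mul, Real.norm_of_nonneg (Real.rpow_nonneg (norm_nonneg y) _)]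
    gcongr
    exact (hbound y hy).le
  · refine Integrable.mono' (hg.norm.mul_const (ε ^ (-c))).restrict hmeas.restrict ?_
    refine (ae_restrict_iff' measurableSet_ball.compl).2 (Eventually.of_forall fun y hy => ?_)
    have hεy : ε ≤ ‖y‖ := by simpa using hy
    rw [norm_mul, Real.norm_of_nonneg (Real.rpow_nonneg (norm_nonneg y) _)]
    exact mul_le_mul_of_nonneg_left (Real.rpow_le_rpow_of_nonpos hε hεy (neg_nonpos.2 hc0))
      (norm_nonneg _)

theorem integrable_norm_sub_rpow_neg_mul {ρ : E → ℝ} (hρ : Integrable ρ μ) {x : E}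
    (hρx : ContinuousAt ρ x) (hE : 1 ≤ Module.finrank ℝ E) {c : ℝ} (hc0 : 0 ≤ c)
    (hcE : c < Module.finrank ℝ E) :
    Integrable (fun y => ‖x - y‖ ^ (-c) * ρ y) μ :=
  integrable_norm_sub_rpow_mul <| integrable_mul_norm_rpow_neg (hρ.comp_add_left x)
    (hρx.comp_of_eq (continuous_const_add x).continuousAt (add_zero x)) hE hc0 hcE

end LocalIntegrability

section HilbertWeight

open Finset

variable {d n : ℕ} {x : Euc d} {xs : Fin (n + 1) → Euc d} {i : Fin (n + 1)}

theorem hilbertWeight_nonneg : 0 ≤ hilbertWeight d n x xs i := by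
  unfold hilbertWeight; positivity

-- With `0 ^ (-d) = 0`, a sample point sitting at `x` gets weight `0`, not the limiting value `1`.
theorem hilbertWeight_self (hd : d ≠ 0) (h : x = xs i) : hilbertWeight d n x xs i = 0 := by
  simp [hilbertWeight, h, Real.zero_rpow (neg_ne_zero.2 (Nat.cast_ne_zero.2 hd))]

theorem inv_hilbertWeight :
    (hilbertWeight d n x xs i)⁻¹ = ∑ j, ‖x - xs i‖ ^ (d : ℝ) * ‖x - xs j‖ ^ (-(d : ℝ)) := by
  rw [hilbertWeight, inv_div, Real.rpow_neg (norm_nonneg _), div_inv_eq_mul, Finset.sum_mul]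
  simp_rw [mul_comm]

theorem measurable_hilbertWeight (d n : ℕ) (x : Euc d) (i : Fin (n + 1)) :
    Measurable fun xs : Fin (n + 1) → Euc d => hilbertWeight d n x xs i := by
  unfold hilbertWeight; fun_prop

theorem hilbertWeight_rpow_le (hd : d ≠ 0) {β : ℝ} (hβ0 : -1 ≤ β) (hβ1 : β < 0) :
    hilbertWeight d n x xs i ^ β ≤
      1 + ∑ j ∈ univ.erase i, ‖x - xs j‖ ^ (-(|β| * d)) * ‖x - xs i‖ ^ (|β| * d) := by
  by_cases hxi : x = xs i
  · rw [hilbertWeight_self hd hxi, Real.zero_rpow hβ1.ne]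
    positivity
  have hr : 0 < ‖x - xs i‖ := norm_pos_iff.2 (sub_ne_zero.2 hxi)
  have hβ : 0 < |β| := abs_pos.2 hβ1.ne
  calc hilbertWeight d n x xs i ^ β = (hilbertWeight d n x xs i)⁻¹ ^ |β| := by
        rw [abs_of_neg hβ1, Real.inv_rpow hilbertWeight_nonneg,
          Real.rpow_neg hilbertWeight_nonneg, inv_inv]
    _ = (∑ j, ‖x - xs i‖ ^ (d : ℝ) * ‖x - xs j‖ ^ (-(d : ℝ))) ^ |β| := by
        rw [inv_hilbertWeight]
    _ ≤ ∑ j, (‖x - xs i‖ ^ (d : ℝ) * ‖x - xs j‖ ^ (-(d : ℝ))) ^ |β| :=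
        Real.rpow_sum_le_sum_rpow _ (fun j _ => by positivity) hβ
          (abs_le.2 ⟨by linarith, by linarith⟩)
    _ = ∑ j, ‖x - xs j‖ ^ (-(|β| * d)) * ‖x - xs i‖ ^ (|β| * d) := by
        refine sum_congr rfl fun j _ => ?_
        rw [Real.mul_rpow (by positivity) (by positivity), ← Real.rpow_mul (norm_nonneg _),
          ← Real.rpow_mul (norm_nonneg _), mul_comm]
        ring_nf
    _ = 1 + ∑ j ∈ univ.erase i, ‖x - xs j‖ ^ (-(|β| * d)) * ‖x - xs i‖ ^ (|β| * d) := by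
        rw [← add_sum_erase _ _ (mem_univ i), ← Real.rpow_add hr, neg_add_cancel, Real.rpow_zero]

end HilbertWeight

theorem hilbert_moment_bound_neg_beta_general
    (d : ℕ) (hd : 1 ≤ d)
    (ρ : Euc d → ℝ) (hρ_nonneg : ∀ y, 0 ≤ ρ y)
    (hρ_prob : (∫ y, ρ y) = 1)
    (x : Euc d) (hρ_cont : ContinuousAt ρ x)
    (n : ℕ) (β : ℝ) (hβ0 : -1 < β) (hβ1 : β < 0)
    (hκβ : Integrable (fun y : Euc d => ρ (x + y) * ‖y‖ ^ (|β| * d))) :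
    Integrable (fun xs : Fin (n + 1) → Euc d =>
        hilbertWeight d n x xs 0 ^ β * ∏ i : Fin (n + 1), ρ (xs i)) ∧
    (∫ xs : Fin (n + 1) → Euc d,
        hilbertWeight d n x xs 0 ^ β * ∏ i : Fin (n + 1), ρ (xs i)) ≤
      1 + (n : ℝ) * (∫ y : Euc d, ρ (x + y) * ‖y‖ ^ (-(|β| * d))) *
        (∫ y : Euc d, ρ (x + y) * ‖y‖ ^ (|β| * d)) := by
  have hρ_int : Integrable ρ := Integrable.of_integral_ne_zero (by simp [hρ_prob])
  have hcd : |β| * d < d := mul_lt_of_lt_one_left (by positivity) (abs_lt.2 ⟨hβ0, by linarith⟩)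
  have hneg : Integrable fun y => ‖x - y‖ ^ (-(|β| * d)) * ρ y :=
    integrable_norm_sub_rpow_neg_mul hρ_int hρ_cont (by simpa using hd) (by positivity)
      (by simpa using hcd)
  have hpos : Integrable fun y => ‖x - y‖ ^ (|β| * d) * ρ y := integrable_norm_sub_rpow_mul hκβ
  have hbound : ∀ xs : Fin (n + 1) → Euc d, hilbertWeight d n x xs 0 ^ β * ∏ i, ρ (xs i) ≤
      (1 + ∑ j ∈ Finset.univ.erase 0, ‖x - xs j‖ ^ (-(|β| * d)) * ‖x - xs 0‖ ^ (|β| * d)) *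
        ∏ i, ρ (xs i) := fun xs =>
    mul_le_mul_of_nonneg_right (hilbertWeight_rpow_le (by omega) hβ0.le hβ1)
      (Finset.prod_nonneg fun i _ => hρ_nonneg (xs i))
  have hdom := integrable_one_add_sum_mul_prod (f := fun y => ‖x - y‖ ^ (-(|β| * d)))
    (g := fun y => ‖x - y‖ ^ (|β| * d)) hρ_int hneg hpos (0 : Fin (n + 1))
  have hint : Integrable fun xs : Fin (n + 1) → Euc d =>
      hilbertWeight d n x xs 0 ^ β * ∏ i, ρ (xs i) := by
    refine hdom.mono' (((measurable_hilbertWeight d n x 0).pow_const β).aestronglyMeasurable.mul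
      (integrable_pi_prod hρ_int).aestronglyMeasurable)
      (Eventually.of_forall fun xs => ?_)
    rw [Real.norm_of_nonneg (mul_nonneg (Real.rpow_nonneg hilbertWeight_nonneg _)
      (Finset.prod_nonneg fun i _ => hρ_nonneg (xs i)))]
    exact hbound xs
  refine ⟨hint, (integral_mono hint hdom hbound).trans_eq ?_⟩
  rw [integral_one_add_sum_mul_prod hρ_int hρ_prob hneg hpos, integral_norm_sub_rpow_mul,
    integral_norm_sub_rpow_mul]

/-- for `−1 < β < 0`, with `κ_β(x) = ∫ ρ(x+y)·‖y‖^{|β|d} dy` assumed finite and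
`κ_{|β|}(x) = ∫ ρ(x+y)·‖y‖^{−|β|d} dy`, the β-th moment of the Hilbert kernel weight `w_0(x)`
is finite and satisfies `E[w_0(x)^β] ≤ 1 + n·κ_{|β|}(x)·κ_β(x)`. -/
theorem hilbert_moment_bound_neg_beta
    (d : ℕ) (hd : 1 ≤ d)
    (ρ : Euc d → ℝ) (hρ_meas : Measurable ρ) (hρ_nonneg : ∀ y, 0 ≤ ρ y)
    (hρ_prob : (∫ y, ρ y) = 1)
    (hρ_var : Integrable (fun y => ρ y * ‖y‖ ^ 2))
    (x : Euc d) (hx : x ∈ interior {y | 0 < ρ y}) (hρ_cont : ContinuousAt ρ x)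
    (n : ℕ) (β : ℝ) (hβ0 : -1 < β) (hβ1 : β < 0)
    (hκβ : Integrable (fun y : Euc d => ρ (x + y) * ‖y‖ ^ (|β| * d))) :
    Integrable (fun xs : Fin (n + 1) → Euc d =>
        hilbertWeight d n x xs 0 ^ β * ∏ i : Fin (n + 1), ρ (xs i)) ∧
    (∫ xs : Fin (n + 1) → Euc d,
        hilbertWeight d n x xs 0 ^ β * ∏ i : Fin (n + 1), ρ (xs i)) ≤
      1 + (n : ℝ) * (∫ y : Euc d, ρ (x + y) * ‖y‖ ^ (-(|β| * d))) *
        (∫ y : Euc d, ρ (x + y) * ‖y‖ ^ (|β| * d)) :=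
  hilbert_moment_bound_neg_beta_general d hd ρ hρ_nonneg hρ_prob x hρ_cont n β hβ0 hβ1 hκβ

end
end

section
/- Consider binary classification: Y ∈ {0,1}, f(x) = P(Y=1|X=x), F(x) = θ(f(x)−1/2) the Bayes classifier, and F̂(x) = θ(f̂(x)−1/2) the plugin classifier built from any estimator f̂(x) of f(x) (random through the training sample). Then for every 0 < α < 1 and every x, the following inequality holds unconditionally: 0 ≤ E[R(F̂(x))] − R(F(x)) ≤ 2·|f(x)−1/2|^{1−α}·(E[|f̂(x)−f(x)|²])^{α/2}, where R denotes the pointwise risk under zero-one loss. -/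
/-!
The plug-in and Bayes classifiers disagree exactly when `f̂(x)` and `f(x)` lie on opposite sides
of `1/2`, and each disagreement costs `|1 - 2 f(x)|`; so the excess risk is
`2 |f(x) - 1/2| · P(disagreement)`. On the disagreement event `|f̂(x) - f(x)| ≥ |f(x) - 1/2|`,
so Markov's inequality bounds `|f(x) - 1/2|² · P(disagreement)` by the mean squared error, and
interpolating with `P(disagreement) ≤ 1` gives the exponent `α`.
-/

open MeasureTheory

lemma mul_le_rpow_mul_rpow_of_sq_mul_le {d p E α : ℝ} (hd : 0 ≤ d) (hp0 : 0 ≤ p) (hp1 : p ≤ 1)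
    (hα0 : 0 ≤ α) (hα2 : α ≤ 2) (h : d ^ 2 * p ≤ E) :
    d * p ≤ d ^ (1 - α) * E ^ (α / 2) := by
  have hsplit : d = d ^ (1 - α) * d ^ α := by
    rw [← Real.rpow_add' hd (by norm_num), sub_add_cancel, Real.rpow_one]
  have hsq : (d ^ 2) ^ (α / 2) = d ^ α := by
    rw [← Real.rpow_natCast, ← Real.rpow_mul hd]
    ring_nf
  calc d * p = d ^ (1 - α) * (d ^ α * p) := by rw [← mul_assoc, ← hsplit]
    _ ≤ d ^ (1 - α) * (d ^ α * p ^ (α / 2)) := by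
        gcongr
        exact Real.self_le_rpow_of_le_one hp0 hp1 (by linarith)
    _ = d ^ (1 - α) * (d ^ 2 * p) ^ (α / 2) := by
        rw [Real.mul_rpow (by positivity) hp0, hsq]
    _ ≤ d ^ (1 - α) * E ^ (α / 2) := by gcongr

-- Estimates `y` whose plug-in decision `θ(y - 1/2)` differs from the Bayes decision `θ(a - 1/2)`.
def disagreementSet (a : ℝ) : Set ℝ := {y | ¬((1 : ℝ) / 2 ≤ y ↔ (1 : ℝ) / 2 ≤ a)}

lemma measurableSet_disagreementSet (a : ℝ) : MeasurableSet (disagreementSet a) :=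
  (measurableSet_Ici.iff (MeasurableSet.const _)).compl

lemma ite_half_le_eq_min_add_indicator (a y : ℝ) :
    (if (1 : ℝ) / 2 ≤ y then 1 - a else a) =
      min a (1 - a) + (disagreementSet a).indicator (fun _ => 2 * |a - 1 / 2|) y := by
  simp only [Set.indicator_apply, disagreementSet, Set.mem_ofPred_eq]
  split_ifs <;> grind

lemma abs_sub_half_le_abs_sub_of_mem_disagreementSet {a y : ℝ} (h : y ∈ disagreementSet a) :
    |a - 1 / 2| ≤ |y - a| := by
  simp only [disagreementSet, Set.mem_ofPred_eq] at h
  grind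

lemma integral_ite_half_le_sub_min {Ω : Type*} [MeasurableSpace Ω] (P : Measure Ω)
    [IsProbabilityMeasure P] {g : Ω → ℝ} (hg : Measurable g) (a : ℝ) :
    (∫ ω, (if (1 : ℝ) / 2 ≤ g ω then 1 - a else a) ∂P) - min a (1 - a) =
      2 * |a - 1 / 2| * P.real (g ⁻¹' disagreementSet a) := by
  have hM := hg (measurableSet_disagreementSet a)
  simp_rw [ite_half_le_eq_min_add_indicator a (g _), ← Set.indicator_comp_right, Function.comp_def]
  rw [integral_add (integrable_const _) ((integrable_const _).indicator hM),
    integral_const, integral_indicator_const _ hM]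
  simp [mul_comm]

lemma sq_mul_measureReal_disagreementSet_le {Ω : Type*} [MeasurableSpace Ω] (P : Measure Ω)
    [IsFiniteMeasure P] {g : Ω → ℝ} {a : ℝ} (hint : Integrable (fun ω => (g ω - a) ^ 2) P) :
    |a - 1 / 2| ^ 2 * P.real (g ⁻¹' disagreementSet a) ≤ ∫ ω, (g ω - a) ^ 2 ∂P := by
  refine le_trans ?_ (mul_meas_ge_le_integral_of_nonneg
    (Filter.Eventually.of_forall fun ω => sq_nonneg (g ω - a)) hint (|a - 1 / 2| ^ 2))
  refine mul_le_mul_of_nonneg_left (measureReal_mono fun ω hω => ?_) (sq_nonneg _)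
  simpa only [Set.mem_ofPred_eq, sq_abs] using
    pow_le_pow_left₀ (abs_nonneg _) (abs_sub_half_le_abs_sub_of_mem_disagreementSet hω) 2

theorem plugin_classifier_excess_risk_bound_general
    {Ω : Type*} [MeasurableSpace Ω] (P : Measure Ω) [IsProbabilityMeasure P]
    (g : Ω → ℝ) (hg : Measurable g)
    (a : ℝ)
    (hint : Integrable (fun ω => (g ω - a) ^ 2) P)
    (α : ℝ) (hα0 : 0 < α) (hα1 : α < 1) :
    0 ≤ (∫ ω, (if (1 : ℝ) / 2 ≤ g ω then 1 - a else a) ∂P) - min a (1 - a) ∧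
    (∫ ω, (if (1 : ℝ) / 2 ≤ g ω then 1 - a else a) ∂P) - min a (1 - a) ≤
      2 * |a - 1 / 2| ^ (1 - α) * (∫ ω, (g ω - a) ^ 2 ∂P) ^ (α / 2) := by
  rw [integral_ite_half_le_sub_min P hg a, mul_assoc, mul_assoc]
  have hmarkov := sq_mul_measureReal_disagreementSet_le P hint
  exact ⟨by positivity, mul_le_mul_of_nonneg_left
    (mul_le_rpow_mul_rpow_of_sq_mul_le (abs_nonneg _) measureReal_nonneg measureReal_le_one
      hα0.le (by linarith) hmarkov) zero_le_two⟩

/-- for binary classification with `f(x) = P(Y=1|X=x) = a ∈ [0,1]` at the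
point `x`, and any (square-integrable, measurable) estimator `g = f̂(x)` of `a` defined on a
probability space `(Ω, P)`, the excess risk of the plugin classifier `θ(f̂(x)−1/2)` over the
Bayes risk `R(F(x)) = min(a, 1−a)` satisfies, for every `0 < α < 1`,
`0 ≤ E[R(F̂(x))] − R(F(x)) ≤ 2·|a−1/2|^{1−α}·(E[|f̂(x)−f(x)|²])^{α/2}`,
where `E[R(F̂(x))] = E[if f̂(x) ≥ 1/2 then 1−a else a]`. -/
theorem plugin_classifier_excess_risk_bound
    {Ω : Type*} [MeasurableSpace Ω] (P : Measure Ω) [IsProbabilityMeasure P]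
    (g : Ω → ℝ) (hg : Measurable g)
    (a : ℝ) (ha0 : 0 ≤ a) (ha1 : a ≤ 1)
    (hint : Integrable (fun ω => (g ω - a) ^ 2) P)
    (α : ℝ) (hα0 : 0 < α) (hα1 : α < 1) :
    0 ≤ (∫ ω, (if (1 : ℝ) / 2 ≤ g ω then 1 - a else a) ∂P) - min a (1 - a) ∧
    (∫ ω, (if (1 : ℝ) / 2 ≤ g ω then 1 - a else a) ∂P) - min a (1 - a) ≤
      2 * |a - 1 / 2| ^ (1 - α) * (∫ ω, (g ω - a) ^ 2 ∂P) ^ (α / 2) :=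
  plugin_classifier_excess_risk_bound_general P g hg a hint α hα0 hα1
end

section
/- Let d ≥ 1, let ρ be a probability density on ℝ^d with finite variance and support Ω, assume ∫ ρ(y)·|f(y)|/(1+‖y‖^d) d^d y < ∞, and let f̂_∞(x) = (∫ ρ(y)·f(y)·‖x−y‖^{−d} d^d y)/(∫ ρ(y)·‖x−y‖^{−d} d^d y) for x ∉ Ω̄. Let x_0 ∈ ∂Ω with ρ(x_0) > 0, assume that ρ and f restricted to Ω are continuous at x_0 (i.e. ρ(y) → ρ(x_0) and f(y) → f(x_0) as y → x_0 within Ω), and assume the local solid angle ω_0 = lim_{r→0} (1/(V_d·ρ(x_0)·r^d))·∫_{‖x_0−y‖≤r} ρ(y) d^d y exists and satisfies ω_0 > 0. Then lim_{x ∉ Ω̄, x → x_0} f̂_∞(x) = f(x_0). -/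
open MeasureTheory Filter

noncomputable section

/-- The large-sample extrapolation function of the Hilbert kernel regression scheme,
`f̂_∞(z) = (∫ ρ(y)·f(y)·‖z−y‖^{−d} dy) / (∫ ρ(y)·‖z−y‖^{−d} dy)`. -/
def hilbertExtrapolation (d : ℕ) (ρ f : Euc d → ℝ) (z : Euc d) : ℝ :=
  (∫ y : Euc d, ρ y * f y * ‖z - y‖ ^ (-(d : ℝ))) /
    ∫ y : Euc d, ρ y * ‖z - y‖ ^ (-(d : ℝ))

/-!
Off the closed support the kernel `‖x - y‖^{-d}` is dominated by a multiple of
`(1 + ‖y‖^d)⁻¹`, so the growth condition on `f` makes both integrals defining `f̂_∞` finite.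
The denominator `D(x) = ∫ ρ(y) ‖x - y‖^{-d} dy` tends to infinity as `x → x₀`: a positive
solid angle gives every annulus `r/6 < ‖y - x₀‖ ≤ r` with `‖x - x₀‖ ≤ r ≤ r₀` a mass of order
`r^d`, on which the kernel is at least `(2r)^{-d}`, so each of the `≈ log_6 (r₀ / ‖x - x₀‖)`
nested annuli contributes a fixed amount. On the other hand
`|∫ ρ (f - f(x₀)) ‖x - ·‖^{-d}| ≤ ε D(x) + M`, with `ε` coming from continuity of `f` near `x₀`
and `M` bounding the far contribution uniformly in `x`; dividing by `D(x)` gives the limit.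
-/

open Metric Function Set Topology

section Kernel

variable {E : Type*} [NormedAddCommGroup E] (d : ℕ)

-- At `x = y` this is `0⁻¹ = 0` (for `d ≥ 1`); the kernel is only used for `x` off the support.
def hilbertKernel (x y : E) : ℝ := (‖x - y‖ ^ d)⁻¹

variable {d}

lemma hilbertKernel_nonneg (x y : E) : 0 ≤ hilbertKernel d x y := by
  unfold hilbertKernel; positivity

lemma inv_pow_le_hilbertKernel {x y : E} {s : ℝ} (hxy : x ≠ y) (hs : ‖x - y‖ ≤ s) :
    (s ^ d)⁻¹ ≤ hilbertKernel d x y := by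
  have hpos : 0 < ‖x - y‖ := norm_pos_iff.2 (sub_ne_zero.2 hxy)
  exact inv_anti₀ (pow_pos hpos d) (pow_le_pow_left₀ hpos.le hs d)

lemma hilbertKernel_le_div_one_add_pow {x y : E} {δ R : ℝ} (hδ : 0 < δ) (hx : ‖x‖ ≤ R)
    (hxy : δ ≤ ‖x - y‖) :
    hilbertKernel d x y ≤ 2 * ((R + 1) / δ + 1) ^ d / (1 + ‖y‖ ^ d) := by
  set t := ‖x - y‖
  set A := (R + 1) / δ + 1
  have ht : 0 < t := hδ.trans_le hxy
  have hR : R + 1 ≤ (R + 1) / δ * t := by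
    rw [div_mul_eq_mul_div, le_div_iff₀ hδ]
    nlinarith [norm_nonneg x]
  have hy : ‖y‖ ≤ ‖x‖ + t := norm_le_insert x y
  have hAt : 1 ≤ A * t ∧ ‖y‖ ≤ A * t := by
    constructor <;> nlinarith [norm_nonneg x]
  have hsum : 1 + ‖y‖ ^ d ≤ 2 * A ^ d * t ^ d := by
    have h1 : 1 ≤ (A * t) ^ d := one_le_pow₀ hAt.1
    have h2 : ‖y‖ ^ d ≤ (A * t) ^ d := pow_le_pow_left₀ (norm_nonneg y) hAt.2 d
    rw [mul_pow] at h1 h2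
    linarith
  rw [hilbertKernel, inv_eq_one_div, div_le_div_iff₀ (pow_pos ht d) (by positivity)]
  linarith

end Kernel

section Integrals

variable {E : Type*} [NormedAddCommGroup E] [MeasurableSpace E] [OpensMeasurableSpace E]
  {μ : Measure E} {d : ℕ}

lemma measurable_hilbertKernel (x : E) : Measurable (hilbertKernel d x) :=
  ((continuous_const.sub continuous_id).norm.pow d).measurable.inv

lemma MeasureTheory.Integrable.div_one_add_norm_pow {ρ : E → ℝ} (hρ : Integrable ρ μ) :
    Integrable (fun y => ρ y / (1 + ‖y‖ ^ d)) μ := by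
  refine hρ.mono (hρ.1.div₀ (continuous_const.add (continuous_norm.pow d)).aestronglyMeasurable)
    (ae_of_all _ fun y => ?_)
  rw [norm_div, Real.norm_of_nonneg (by positivity : (0 : ℝ) ≤ 1 + ‖y‖ ^ d)]
  exact div_le_self (norm_nonneg _) (le_add_of_nonneg_right (by positivity))

lemma integrable_mul_hilbertKernel {h : E → ℝ} {x : E} (hh : AEStronglyMeasurable h μ)
    (hw : Integrable (fun y => h y / (1 + ‖y‖ ^ d)) μ) (hx : x ∉ closure (support h)) :
    Integrable (fun y => h y * hilbertKernel d x y) μ := by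
  obtain ⟨δ, hδ, hsep⟩ : ∃ δ > 0, ∀ y ∈ support h, δ ≤ dist x y := by
    simpa [Metric.mem_closure_iff] using hx
  set C := 2 * ((‖x‖ + 1) / δ + 1) ^ d
  refine (hw.norm.const_mul C).mono' (hh.mul (measurable_hilbertKernel x).aestronglyMeasurable)
    (ae_of_all _ fun y => ?_)
  by_cases hy : h y = 0
  · simp only [hy, zero_mul, norm_zero]; positivity
  have hK := hilbertKernel_le_div_one_add_pow (d := d) hδ le_rfl
    ((hsep y hy).trans_eq (dist_eq_norm x y))
  calc ‖h y * hilbertKernel d x y‖ = |h y| * hilbertKernel d x y := by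
        rw [Real.norm_eq_abs, abs_mul, abs_of_nonneg (hilbertKernel_nonneg x y)]
    _ ≤ |h y| * (C / (1 + ‖y‖ ^ d)) := mul_le_mul_of_nonneg_left hK (abs_nonneg _)
    _ = C * ‖h y / (1 + ‖y‖ ^ d)‖ := by
        rw [Real.norm_eq_abs, abs_div, abs_of_pos (by positivity : (0 : ℝ) < 1 + ‖y‖ ^ d)]
        ring

lemma exists_forall_setIntegral_compl_closedBall_le {h : E → ℝ} {δ : ℝ} (x₀ : E) (hδ : 0 < δ)
    (hw : Integrable (fun y => h y / (1 + ‖y‖ ^ d)) μ) :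
    ∃ M, ∀ x ∈ ball x₀ (δ / 2),
      ∫ y in (closedBall x₀ δ)ᶜ, |h y| * hilbertKernel d x y ∂μ ≤ M := by
  set C := 2 * ((‖x₀‖ + δ / 2 + 1) / (δ / 2) + 1) ^ d
  refine ⟨∫ y in (closedBall x₀ δ)ᶜ, C * |h y / (1 + ‖y‖ ^ d)| ∂μ, fun x hx => ?_⟩
  refine integral_mono_of_nonneg
    (ae_of_all _ fun y => mul_nonneg (abs_nonneg _) (hilbertKernel_nonneg x y))
    (hw.abs.const_mul C).integrableOn ?_
  filter_upwards [ae_restrict_mem measurableSet_closedBall.compl] with y hy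
  rw [mem_compl_iff, mem_closedBall, not_le] at hy
  rw [mem_ball] at hx
  have hxy : δ / 2 ≤ ‖x - y‖ := by
    rw [← dist_eq_norm]; linarith [dist_triangle y x x₀, dist_comm x y]
  have hxR : ‖x‖ ≤ ‖x₀‖ + δ / 2 := by
    linarith [norm_le_insert' x x₀, dist_eq_norm x x₀]
  calc |h y| * hilbertKernel d x y ≤ |h y| * (C / (1 + ‖y‖ ^ d)) :=
        mul_le_mul_of_nonneg_left (hilbertKernel_le_div_one_add_pow (half_pos hδ) hxR hxy)
          (abs_nonneg _)
    _ = C * |h y / (1 + ‖y‖ ^ d)| := by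
        rw [abs_div, abs_of_pos (by positivity : (0 : ℝ) < 1 + ‖y‖ ^ d)]
        ring

lemma exists_abs_integral_mul_hilbertKernel_le {h ρ : E → ℝ} {δ ε : ℝ} (x₀ : E) (hδ : 0 < δ)
    (hε : 0 ≤ ε) (hρ0 : ∀ y, 0 ≤ ρ y) (hw : Integrable (fun y => h y / (1 + ‖y‖ ^ d)) μ)
    (hnear : ∀ y ∈ closedBall x₀ δ, |h y| ≤ ε * ρ y) :
    ∃ M, ∀ x ∈ ball x₀ (δ / 2), Integrable (fun y => h y * hilbertKernel d x y) μ →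
      Integrable (fun y => ρ y * hilbertKernel d x y) μ →
      |∫ y, h y * hilbertKernel d x y ∂μ| ≤ ε * ∫ y, ρ y * hilbertKernel d x y ∂μ + M := by
  obtain ⟨M, hM⟩ := exists_forall_setIntegral_compl_closedBall_le x₀ hδ hw
  refine ⟨M, fun x hx hhK hρK => ?_⟩
  have habs_eq : ∀ y, |h y * hilbertKernel d x y| = |h y| * hilbertKernel d x y := fun y => by
    rw [abs_mul, abs_of_nonneg (hilbertKernel_nonneg x y)]
  have habs : Integrable (fun y => |h y| * hilbertKernel d x y) μ := by
    simpa only [habs_eq] using hhK.abs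
  have hnear_le : ∫ y in closedBall x₀ δ, |h y| * hilbertKernel d x y ∂μ ≤
      ε * ∫ y, ρ y * hilbertKernel d x y ∂μ := by
    calc ∫ y in closedBall x₀ δ, |h y| * hilbertKernel d x y ∂μ
        ≤ ∫ y in closedBall x₀ δ, ε * (ρ y * hilbertKernel d x y) ∂μ :=
          setIntegral_mono_on habs.integrableOn (hρK.const_mul ε).integrableOn
            measurableSet_closedBall fun y hy => by
              rw [← mul_assoc]
              exact mul_le_mul_of_nonneg_right (hnear y hy) (hilbertKernel_nonneg x y)
      _ = ε * ∫ y in closedBall x₀ δ, ρ y * hilbertKernel d x y ∂μ := integral_const_mul _ _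
      _ ≤ ε * ∫ y, ρ y * hilbertKernel d x y ∂μ :=
          mul_le_mul_of_nonneg_left (setIntegral_le_integral hρK
            (ae_of_all _ fun y => mul_nonneg (hρ0 y) (hilbertKernel_nonneg x y))) hε
  calc |∫ y, h y * hilbertKernel d x y ∂μ|
      ≤ ∫ y, |h y| * hilbertKernel d x y ∂μ := by
        exact abs_integral_le_integral_abs.trans_eq (by simp only [habs_eq])
    _ = ∫ y in closedBall x₀ δ, |h y| * hilbertKernel d x y ∂μ +
          ∫ y in (closedBall x₀ δ)ᶜ, |h y| * hilbertKernel d x y ∂μ :=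
        (integral_add_compl measurableSet_closedBall habs).symm
    _ ≤ ε * ∫ y, ρ y * hilbertKernel d x y ∂μ + M := add_le_add hnear_le (hM x hx)

theorem exists_eventually_abs_integral_mul_hilbertKernel_sub_le {ρ f : E → ℝ} {x₀ : E} {ε : ℝ}
    (hρ0 : ∀ y, 0 ≤ ρ y) (hρ : Integrable ρ μ) (hf : AEStronglyMeasurable f μ)
    (hρfw : Integrable (fun y => ρ y * f y / (1 + ‖y‖ ^ d)) μ)
    (hf_cont : Tendsto f (𝓝[support ρ] x₀) (𝓝 (f x₀))) (hε : 0 < ε) :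
    ∃ M, ∀ᶠ x in 𝓝[(closure (support ρ))ᶜ] x₀,
      |∫ y, ρ y * f y * hilbertKernel d x y ∂μ - f x₀ * ∫ y, ρ y * hilbertKernel d x y ∂μ| ≤
        ε * ∫ y, ρ y * hilbertKernel d x y ∂μ + M := by
  obtain ⟨δ, hδ, hfδ⟩ := Metric.tendsto_nhdsWithin_nhds.1 hf_cont ε hε
  have hnear : ∀ y ∈ closedBall x₀ (δ / 2), |ρ y * (f y - f x₀)| ≤ ε * ρ y := fun y hy => by
    by_cases hy0 : ρ y = 0
    · simp [hy0]
    rw [abs_mul, abs_of_nonneg (hρ0 y), mul_comm ε]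
    exact mul_le_mul_of_nonneg_left (hfδ hy0 (by linarith [mem_closedBall.1 hy])).le (hρ0 y)
  obtain ⟨M, hM⟩ := exists_abs_integral_mul_hilbertKernel_le x₀ (half_pos hδ) hε.le hρ0
    ((hρfw.sub (hρ.div_one_add_norm_pow.const_mul (f x₀))).congr
      (ae_of_all _ fun y => by simp only [Pi.sub_apply]; ring)) hnear
  refine ⟨M, ?_⟩
  filter_upwards [nhdsWithin_le_nhds (ball_mem_nhds x₀ (by positivity : 0 < δ / 2 / 2)),
    self_mem_nhdsWithin] with x hxδ hx
  have hρK := integrable_mul_hilbertKernel (d := d) hρ.1 hρ.div_one_add_norm_pow hx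
  have hρfK : Integrable (fun y => ρ y * f y * hilbertKernel d x y) μ :=
    integrable_mul_hilbertKernel (hρ.1.mul hf) hρfw
      fun h => hx (closure_mono (support_mul_subset_left _ _) h)
  have hdevK : Integrable (fun y => ρ y * (f y - f x₀) * hilbertKernel d x y) μ :=
    (hρfK.sub (hρK.const_mul (f x₀))).congr
      (ae_of_all _ fun y => by simp only [Pi.sub_apply]; ring)
  rw [← integral_const_mul, ← integral_sub hρfK (hρK.const_mul _)]
  convert hM x hxδ hdevK hρK using 4
  ring

end Integrals

section Denominator

lemma natCast_mul_le_integral_of_le_setIntegral_diff {α : Type*} [MeasurableSpace α]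
    {μ : Measure α} {g : α → ℝ} {s : ℕ → Set α} {c : ℝ} {K : ℕ} (hg : Integrable g μ)
    (hg0 : ∀ y, 0 ≤ g y) (hs : Antitone s) (hsm : ∀ i, MeasurableSet (s i))
    (h : ∀ i < K, c ≤ ∫ y in s i \ s (i + 1), g y ∂μ) :
    K * c ≤ ∫ y, g y ∂μ := by
  have htele : ∀ n ≤ K, n * c ≤ ∫ y in s 0, g y ∂μ - ∫ y in s n, g y ∂μ := by
    intro n hn
    induction n with
    | zero => simp
    | succ n ih =>
      have hn' := h n hn
      rw [setIntegral_sdiff (hsm _) hg.integrableOn (hs n.le_succ)] at hn'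
      push_cast
      linarith [ih (by omega)]
  linarith [htele K le_rfl, setIntegral_le_integral (s := s 0) hg (ae_of_all _ hg0),
    setIntegral_nonneg (μ := μ) (hsm K) fun y _ => hg0 y]

variable {E : Type*} [NormedAddCommGroup E] [MeasurableSpace E] {μ : Measure E} {d : ℕ}
  {ρ : E → ℝ} {x₀ : E}

lemma exists_le_setIntegral_closedBall_diff [OpensMeasurableSpace E] {m : ℝ} (hd : 1 ≤ d)
    (hρ : Integrable ρ μ) (hm : 0 < m)
    (hsolid : Tendsto (fun r => (∫ y in closedBall x₀ r, ρ y ∂μ) / r ^ d) (𝓝[>] 0) (𝓝 m)) :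
    ∃ r₀ > 0, ∀ r, 0 < r → r ≤ r₀ →
      m / 4 * r ^ d ≤ ∫ y in closedBall x₀ r \ closedBall x₀ (r / 6), ρ y ∂μ := by
  obtain ⟨r₀, hr₀, hsub⟩ := mem_nhdsGT_iff_exists_Ioc_subset.1
    (hsolid (Ioo_mem_nhds (half_lt_self hm) (by linarith : m < 3 * m / 2)))
  have hF : ∀ s, 0 < s → s ≤ r₀ → m / 2 * s ^ d < ∫ y in closedBall x₀ s, ρ y ∂μ ∧
      ∫ y in closedBall x₀ s, ρ y ∂μ < 3 * m / 2 * s ^ d := fun s hs hsr₀ => by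
    obtain ⟨h1, h2⟩ := hsub ⟨hs, hsr₀⟩
    exact ⟨(lt_div_iff₀ (pow_pos hs d)).1 h1, (div_lt_iff₀ (pow_pos hs d)).1 h2⟩
  refine ⟨r₀, hr₀, fun r hr hrr₀ => ?_⟩
  have h6 : (r / 6) ^ d ≤ r ^ d / 6 := by
    rw [div_pow]
    exact div_le_div_of_nonneg_left (by positivity) (by norm_num)
      (le_self_pow₀ (by norm_num) (by omega))
  rw [setIntegral_sdiff measurableSet_closedBall hρ.integrableOn
    (closedBall_subset_closedBall (by linarith))]
  linarith [(hF r hr hrr₀).1, (hF (r / 6) (by positivity) (by linarith)).2,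
    mul_le_mul_of_nonneg_left h6 (by positivity : (0 : ℝ) ≤ 3 * m / 2)]

lemma inv_two_mul_pow_mul_setIntegral_le {x : E} {s : Set E} {r : ℝ} (hρ0 : ∀ y, 0 ≤ ρ y)
    (hρ : Integrable ρ μ) (hρK : Integrable (fun y => ρ y * hilbertKernel d x y) μ)
    (hx : x ∉ support ρ) (hs : MeasurableSet s) (hsr : s ⊆ closedBall x₀ r)
    (hxr : dist x x₀ ≤ r) :
    ((2 * r) ^ d)⁻¹ * ∫ y in s, ρ y ∂μ ≤ ∫ y in s, ρ y * hilbertKernel d x y ∂μ := by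
  rw [← integral_const_mul]
  refine setIntegral_mono_on (hρ.const_mul _).integrableOn hρK.integrableOn hs fun y hy => ?_
  by_cases hy0 : ρ y = 0
  · simp [hy0]
  have hxy : x ≠ y := fun h => hx (h ▸ hy0)
  have h2r : ‖x - y‖ ≤ 2 * r := by
    rw [← dist_eq_norm]; linarith [dist_triangle_right x y x₀, mem_closedBall.1 (hsr hy)]
  rw [mul_comm]
  exact mul_le_mul_of_nonneg_left (inv_pow_le_hilbertKernel hxy h2r) (hρ0 y)

lemma exists_forall_le_setIntegral_annulus_mul_hilbertKernel [OpensMeasurableSpace E] {m : ℝ}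
    (hd : 1 ≤ d) (hρ0 : ∀ y, 0 ≤ ρ y) (hρ : Integrable ρ μ) (hm : 0 < m)
    (hsolid : Tendsto (fun r => (∫ y in closedBall x₀ r, ρ y ∂μ) / r ^ d) (𝓝[>] 0) (𝓝 m)) :
    ∃ r₀ > 0, ∀ r, 0 < r → r ≤ r₀ → ∀ x ∉ closure (support ρ), dist x x₀ ≤ r →
      m / 4 / 2 ^ d ≤
        ∫ y in closedBall x₀ r \ closedBall x₀ (r / 6), ρ y * hilbertKernel d x y ∂μ := by
  obtain ⟨r₀, hr₀, hshell⟩ := exists_le_setIntegral_closedBall_diff hd hρ hm hsolid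
  refine ⟨r₀, hr₀, fun r hr hrr₀ x hx hxr => ?_⟩
  calc m / 4 / 2 ^ d = ((2 * r) ^ d)⁻¹ * (m / 4 * r ^ d) := by
        rw [mul_pow]; field_simp
    _ ≤ ((2 * r) ^ d)⁻¹ * ∫ y in closedBall x₀ r \ closedBall x₀ (r / 6), ρ y ∂μ :=
        mul_le_mul_of_nonneg_left (hshell r hr hrr₀) (by positivity)
    _ ≤ _ := inv_two_mul_pow_mul_setIntegral_le hρ0 hρ
        (integrable_mul_hilbertKernel hρ.1 hρ.div_one_add_norm_pow hx)
        (fun h => hx (subset_closure h)) (measurableSet_closedBall.diff measurableSet_closedBall)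
        sdiff_subset hxr

theorem tendsto_integral_mul_hilbertKernel_atTop [OpensMeasurableSpace E] {m : ℝ} (hd : 1 ≤ d)
    (hρ0 : ∀ y, 0 ≤ ρ y) (hρ : Integrable ρ μ) (hm : 0 < m)
    (hsolid : Tendsto (fun r => (∫ y in closedBall x₀ r, ρ y ∂μ) / r ^ d) (𝓝[>] 0) (𝓝 m)) :
    Tendsto (fun x => ∫ y, ρ y * hilbertKernel d x y ∂μ) (𝓝[(closure (support ρ))ᶜ] x₀)
      atTop := by
  obtain ⟨r₀, hr₀, hannulus⟩ :=
    exists_forall_le_setIntegral_annulus_mul_hilbertKernel hd hρ0 hρ hm hsolid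
  have hradius : Antitone fun i : ℕ => r₀ / 6 ^ i := fun i j hij =>
    div_le_div_of_nonneg_left hr₀.le (by positivity) (pow_le_pow_right₀ (by norm_num) hij)
  refine tendsto_atTop.2 fun b => ?_
  obtain ⟨K, hK⟩ := exists_nat_ge (b / (m / 4 / 2 ^ d))
  filter_upwards [nhdsWithin_le_nhds (closedBall_mem_nhds x₀ (by positivity : 0 < r₀ / 6 ^ K)),
    self_mem_nhdsWithin] with x hxK hx
  calc b ≤ K * (m / 4 / 2 ^ d) := (div_le_iff₀ (by positivity)).1 hK
    _ ≤ _ := natCast_mul_le_integral_of_le_setIntegral_diff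
      (s := fun i => closedBall x₀ (r₀ / 6 ^ i))
      (integrable_mul_hilbertKernel hρ.1 hρ.div_one_add_norm_pow hx)
      (fun y => mul_nonneg (hρ0 y) (hilbertKernel_nonneg x y))
      (fun i j hij => closedBall_subset_closedBall (hradius hij))
      (fun i => measurableSet_closedBall) fun i hi => by
        rw [pow_succ, ← div_div]
        exact hannulus _ (by positivity) (div_le_self hr₀.le (one_le_pow₀ (by norm_num))) x hx
          ((mem_closedBall.1 hxK).trans (hradius hi.le))

end Denominator

lemma tendsto_div_of_forall_abs_sub_mul_le {α : Type*} {l : Filter α} {N D : α → ℝ} {a : ℝ}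
    (hD : Tendsto D l atTop) (h : ∀ ε > 0, ∃ M, ∀ᶠ x in l, |N x - a * D x| ≤ ε * D x + M) :
    Tendsto (fun x => N x / D x) l (𝓝 a) := by
  refine Metric.tendsto_nhds.2 fun ε hε => ?_
  obtain ⟨M, hM⟩ := h (ε / 2) (half_pos hε)
  filter_upwards [hM, hD.eventually_gt_atTop 0, hD.eventually_gt_atTop (2 * M / ε)]
    with x hx hDpos hDM
  have hMD : 2 * M < D x * ε := (div_lt_iff₀ hε).1 hDM
  rw [Real.dist_eq, show N x / D x - a = (N x - a * D x) / D x by field_simp, abs_div,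
    abs_of_pos hDpos, div_lt_iff₀ hDpos]
  linarith

lemma unitBallVol_pos (d : ℕ) : 0 < unitBallVol d :=
  div_pos (Real.rpow_pos_of_pos Real.pi_pos _) (Real.Gamma_pos_of_pos (by positivity))

lemma hilbertExtrapolation_eq_div (d : ℕ) (ρ f : Euc d → ℝ) (x : Euc d) :
    hilbertExtrapolation d ρ f x =
      (∫ y, ρ y * f y * hilbertKernel d x y) / ∫ y, ρ y * hilbertKernel d x y := by
  simp only [hilbertExtrapolation, hilbertKernel, Real.rpow_neg (norm_nonneg _),
    Real.rpow_natCast]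

theorem hilbert_extrapolation_boundary_continuity_general
    (d : ℕ) (hd : 1 ≤ d)
    (ρ : Euc d → ℝ) (hρ_nonneg : ∀ y, 0 ≤ ρ y)
    (hρ_prob : (∫ y, ρ y) = 1)
    (f : Euc d → ℝ) (hf_meas : Measurable f)
    (hf_growth : Integrable (fun y => ρ y * |f y| / (1 + ‖y‖ ^ (d : ℝ))))
    (x₀ : Euc d) (hρx₀ : 0 < ρ x₀)
    (hf_cont : Tendsto f (nhdsWithin x₀ {y | 0 < ρ y}) (nhds (f x₀)))
    (ω₀ : ℝ) (hω₀ : 0 < ω₀)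
    (hsolid : Tendsto
      (fun r : ℝ => (∫ y in Metric.closedBall x₀ r, ρ y) / (unitBallVol d * ρ x₀ * r ^ d))
      (nhdsWithin 0 (Set.Ioi 0)) (nhds ω₀)) :
    Tendsto (hilbertExtrapolation d ρ f)
      (nhdsWithin x₀ (closure {y | 0 < ρ y})ᶜ) (nhds (f x₀)) := by
  have hΩ : {y | 0 < ρ y} = support ρ := Set.ext fun y => (hρ_nonneg y).lt_iff_ne'
  rw [hΩ] at hf_cont ⊢
  have hρ : Integrable ρ := Integrable.of_integral_ne_zero (by rw [hρ_prob]; exact one_ne_zero)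
  have hc : 0 < unitBallVol d * ρ x₀ := mul_pos (unitBallVol_pos d) hρx₀
  have hD := tendsto_integral_mul_hilbertKernel_atTop hd hρ_nonneg hρ (mul_pos hc hω₀)
    ((hsolid.const_mul _).congr fun r => by rw [mul_div_assoc', mul_div_mul_left _ _ hc.ne'])
  have hρfw : Integrable (fun y => ρ y * f y / (1 + ‖y‖ ^ d)) :=
    hf_growth.mono ((hρ.1.mul hf_meas.aestronglyMeasurable).div₀
      (continuous_const.add (continuous_norm.pow d)).aestronglyMeasurable)
      (ae_of_all _ fun y => by simp [abs_of_nonneg (hρ_nonneg y)])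
  exact (tendsto_div_of_forall_abs_sub_mul_le hD fun ε hε =>
    exists_eventually_abs_integral_mul_hilbertKernel_sub_le hρ_nonneg hρ
      hf_meas.aestronglyMeasurable hρfw hf_cont hε).congr
    fun x => (hilbertExtrapolation_eq_div d ρ f x).symm

/-- continuity of the extrapolation at a boundary point `x₀ ∈ ∂Ω` with
`ρ(x₀) > 0`: if `ρ` and `f` restricted to `Ω` are continuous at `x₀` and the local solid
angle `ω₀ = lim_{r→0} (1/(V_d·ρ(x₀)·r^d))·∫_{‖x₀−y‖≤r} ρ(y) dy` exists with `ω₀ > 0`, then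
`f̂_∞(x) → f(x₀)` as `x → x₀` with `x` outside the closed support of `ρ`. -/
theorem hilbert_extrapolation_boundary_continuity
    (d : ℕ) (hd : 1 ≤ d)
    (ρ : Euc d → ℝ) (hρ_meas : Measurable ρ) (hρ_nonneg : ∀ y, 0 ≤ ρ y)
    (hρ_prob : (∫ y, ρ y) = 1)
    (hρ_var : Integrable (fun y => ρ y * ‖y‖ ^ 2))
    (f : Euc d → ℝ) (hf_meas : Measurable f)
    (hf_growth : Integrable (fun y => ρ y * |f y| / (1 + ‖y‖ ^ (d : ℝ))))
    (x₀ : Euc d) (hx₀ : x₀ ∈ frontier {y | 0 < ρ y}) (hρx₀ : 0 < ρ x₀)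
    (hρ_cont : Tendsto ρ (nhdsWithin x₀ {y | 0 < ρ y}) (nhds (ρ x₀)))
    (hf_cont : Tendsto f (nhdsWithin x₀ {y | 0 < ρ y}) (nhds (f x₀)))
    (ω₀ : ℝ) (hω₀ : 0 < ω₀)
    (hsolid : Tendsto
      (fun r : ℝ => (∫ y in Metric.closedBall x₀ r, ρ y) / (unitBallVol d * ρ x₀ * r ^ d))
      (nhdsWithin 0 (Set.Ioi 0)) (nhds ω₀)) :
    Tendsto (hilbertExtrapolation d ρ f)
      (nhdsWithin x₀ (closure {y | 0 < ρ y})ᶜ) (nhds (f x₀)) :=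
  hilbert_extrapolation_boundary_continuity_general d hd ρ hρ_nonneg hρ_prob f hf_meas hf_growth x₀
    hρx₀ hf_cont ω₀ hω₀ hsolid

end
end

section
/- Let E > 0, D > 0, and let t_1 satisfy 0 < t_1 < D/3, so that t ↦ t·ln(D/t) is positive and strictly increasing on (0, t_1]. Then the integral I_n = ∫_0^{t_1} exp(−n·E·t·ln(D/t)) dt satisfies I_n ~ 1/(E·n·ln n) as n → ∞, i.e. lim_{n→∞} E·n·ln(n)·I_n = 1. -/
/-!
For `0 < a ≤ t ≤ b < D` one has `log (D / b) ≤ log (D / t) ≤ log (D / a)`, so on `[a, b]` the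
integrand `exp (-K t log (D / t))` is squeezed between two exponentials `exp (-k t)` with
explicit integrals. With `K = E x` and `ℓ = log x`, cut the integral at `c = 1 / (x ℓ²)` for the
lower bound (dropping `[0, c]`) and at `d = ℓ² / x` for the upper bound. Both `log (D / c)` and
`log (D / d)` are `ℓ + O(log ℓ) ~ ℓ`, `K c log (D / c) → 0`, and beyond `d` the integrand is
`O(exp (-E ℓ² log (D / t₁)))`; hence both bounds are `(1 + o(1)) / (E x ℓ)`.
-/

open MeasureTheory Filter Real Topology

theorem integral_exp_neg_mul {k : ℝ} (hk : k ≠ 0) (a b : ℝ) :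
    ∫ t in a..b, exp (-(k * t)) = (exp (-(k * a)) - exp (-(k * b))) / k := by
  simp_rw [← neg_mul]
  rw [intervalIntegral.integral_comp_mul_left (fun y => exp y) (neg_ne_zero.2 hk), integral_exp,
    smul_eq_mul, inv_neg, neg_mul, ← mul_neg, neg_sub, inv_mul_eq_div]

theorem integral_exp_neg_mul_le {k : ℝ} (hk : 0 < k) (a b : ℝ) :
    ∫ t in a..b, exp (-(k * t)) ≤ exp (-(k * a)) / k := by
  rw [integral_exp_neg_mul hk.ne']
  gcongr
  linarith [exp_pos (-(k * b))]

theorem continuous_mul_log_div (D : ℝ) : Continuous fun t => t * log (D / t) := by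
  rcases eq_or_ne D 0 with rfl | hD
  · simpa using continuous_const
  have h : (fun t => t * log (D / t)) = fun t => t * log D - t * log t := by
    funext t
    rcases eq_or_ne t 0 with rfl | ht
    · simp
    rw [log_div hD ht]
    ring
  rw [h]
  exact (continuous_id.mul continuous_const).sub continuous_mul_log

theorem continuous_exp_neg_mul_mul_log_div (K D : ℝ) :
    Continuous fun t => exp (-(K * t * log (D / t))) := by
  simp_rw [mul_assoc]
  exact (continuous_const.mul (continuous_mul_log_div D)).neg.rexp

section LaplaceBounds

variable {K D : ℝ}

theorem integral_exp_neg_mul_log_div_left_mul_le {a b : ℝ} (hK : 0 ≤ K) (hD : 0 < D)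
    (ha : 0 < a) (hab : a ≤ b) :
    ∫ t in a..b, exp (-(K * log (D / a) * t)) ≤ ∫ t in a..b, exp (-(K * t * log (D / t))) := by
  refine intervalIntegral.integral_mono_on hab (Continuous.intervalIntegrable (by fun_prop) a b)
    ((continuous_exp_neg_mul_mul_log_div K D).intervalIntegrable a b) fun t ht => ?_
  have ht0 : 0 < t := ha.trans_le ht.1
  have hlog : log (D / t) ≤ log (D / a) :=
    log_le_log (by positivity) (div_le_div_of_nonneg_left hD.le ha ht.1)
  rw [exp_le_exp, neg_le_neg_iff, mul_right_comm]
  gcongr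

theorem integral_le_integral_exp_neg_mul_log_div_right_mul {a b : ℝ} (hK : 0 ≤ K) (hD : 0 < D)
    (ha : 0 ≤ a) (hab : a ≤ b) :
    ∫ t in a..b, exp (-(K * t * log (D / t))) ≤ ∫ t in a..b, exp (-(K * log (D / b) * t)) := by
  refine intervalIntegral.integral_mono_on hab
    ((continuous_exp_neg_mul_mul_log_div K D).intervalIntegrable a b)
    (Continuous.intervalIntegrable (by fun_prop) a b) fun t ht => ?_
  rcases (ha.trans ht.1).eq_or_lt with rfl | ht0
  · simp
  have hlog : log (D / b) ≤ log (D / t) :=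
    log_le_log (div_pos hD (ht0.trans_le ht.2)) (div_le_div_of_nonneg_left hD.le ht0 ht.2)
  rw [exp_le_exp, neg_le_neg_iff, mul_right_comm]
  gcongr

theorem exp_sub_exp_div_le_integral_exp_neg_mul_mul_log_div {a b : ℝ} (hK : 0 < K) (ha : 0 < a)
    (hab : a ≤ b) (haD : a < D) :
    (exp (-(K * log (D / a) * a)) - exp (-(K * log (D / a) * b))) / (K * log (D / a)) ≤
      ∫ t in (0 : ℝ)..b, exp (-(K * t * log (D / t))) := by
  have hD : 0 < D := ha.trans haD
  have hk : 0 < K * log (D / a) := mul_pos hK (log_pos ((one_lt_div ha).2 haD))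
  have hg := continuous_exp_neg_mul_mul_log_div K D
  rw [← integral_exp_neg_mul hk.ne', ← intervalIntegral.integral_add_adjacent_intervals
    (hg.intervalIntegrable 0 a) (hg.intervalIntegrable a b)]
  calc _ ≤ ∫ t in a..b, exp (-(K * t * log (D / t))) :=
        integral_exp_neg_mul_log_div_left_mul_le hK.le hD ha hab
    _ ≤ _ := le_add_of_nonneg_left
        (intervalIntegral.integral_nonneg ha.le fun t _ => (exp_pos _).le)

theorem integral_exp_neg_mul_mul_log_div_le {d b : ℝ} (hK : 0 < K) (hd : 0 < d) (hdb : d ≤ b)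
    (hbD : b < D) :
    ∫ t in (0 : ℝ)..b, exp (-(K * t * log (D / t))) ≤
      1 / (K * log (D / d)) + exp (-(K * log (D / b) * d)) / (K * log (D / b)) := by
  have hD : 0 < D := hd.trans_le hdb |>.trans hbD
  have hkd : 0 < K * log (D / d) := mul_pos hK (log_pos ((one_lt_div hd).2 (hdb.trans_lt hbD)))
  have hkb : 0 < K * log (D / b) := mul_pos hK (log_pos ((one_lt_div (hd.trans_le hdb)).2 hbD))
  have hg := continuous_exp_neg_mul_mul_log_div K D
  rw [← intervalIntegral.integral_add_adjacent_intervals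
    (hg.intervalIntegrable 0 d) (hg.intervalIntegrable d b)]
  gcongr
  · calc _ ≤ ∫ t in (0 : ℝ)..d, exp (-(K * log (D / d) * t)) :=
          integral_le_integral_exp_neg_mul_log_div_right_mul hK.le hD le_rfl hd.le
      _ ≤ _ := by simpa using integral_exp_neg_mul_le hkd 0 d
  · exact (integral_le_integral_exp_neg_mul_log_div_right_mul hK.le hD hd.le hdb).trans
      (integral_exp_neg_mul_le hkb d b)

end LaplaceBounds

theorem tendsto_log_div_log_zpow_div_div_log {D : ℝ} (hD : 0 < D) (p : ℤ) :
    Tendsto (fun x => log (D / (log x ^ p / x)) / log x) atTop (𝓝 1) := by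
  have hℓ := tendsto_log_atTop
  have h : Tendsto (fun x => log D / log x + 1 - p * (log (log x) / log x)) atTop (𝓝 1) := by
    simpa using ((tendsto_const_nhds.div_atTop hℓ).add_const 1).sub
      ((isLittleO_log_id_atTop.tendsto_div_nhds_zero.comp hℓ).const_mul (p : ℝ))
  refine h.congr' ?_
  filter_upwards [hℓ.eventually_gt_atTop 0, eventually_gt_atTop 0] with x hℓx hx
  rw [log_div hD.ne' (by positivity), log_div (by positivity) hx.ne', log_zpow]
  field_simp
  ring

section Asymptotics

variable {E D : ℝ}

theorem tendsto_mul_log_mul_exp_sub_exp_div {c : ℝ → ℝ} {t₁ : ℝ} (hE : 0 < E) (ht₁ : 0 < t₁)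
    (hc : Tendsto (fun x => log (D / c x) / log x) atTop (𝓝 1))
    (hxc : Tendsto (fun x => x * log x * c x) atTop (𝓝 0)) :
    Tendsto (fun x => E * x * log x *
      ((exp (-(x * E * log (D / c x) * c x)) - exp (-(x * E * log (D / c x) * t₁))) /
        (x * E * log (D / c x)))) atTop (𝓝 1) := by
  have hℓ := tendsto_log_atTop
  have hL : Tendsto (fun x => log (D / c x)) atTop atTop := by
    refine (hc.pos_mul_atTop one_pos hℓ).congr' ?_
    filter_upwards [hℓ.eventually_gt_atTop 0] with x hx
    field_simp
  have h₁ : Tendsto (fun x => exp (-(E * (log (D / c x) / log x) * (x * log x * c x))))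
      atTop (𝓝 1) := by
    simpa using ((hc.const_mul E).mul hxc).neg.rexp
  have h₂ : Tendsto (fun x => exp (-(x * E * log (D / c x) * t₁))) atTop (𝓝 0) :=
    tendsto_exp_neg_atTop_nhds_zero.comp
      (((tendsto_id.atTop_mul_const hE).atTop_mul_atTop₀ hL).atTop_mul_const ht₁)
  have h := (hc.inv₀ one_ne_zero).mul (h₁.sub h₂)
  rw [inv_one, sub_zero, one_mul] at h
  refine h.congr' ?_
  filter_upwards [eventually_gt_atTop 0, hℓ.eventually_gt_atTop 0] with x hx hℓx
  have : E * (log (D / c x) / log x) * (x * log x * c x) = x * E * log (D / c x) * c x := by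
    field_simp
  rw [this]
  field_simp

theorem tendsto_mul_log_mul_inv_add_exp_div {m : ℝ} (hE : 0 < E) (hD : 0 < D) (hm : 0 < m) :
    Tendsto (fun x => E * x * log x * (1 / (x * E * log (D / (log x ^ (2 : ℤ) / x))) +
        exp (-(x * E * m * (log x ^ (2 : ℤ) / x))) / (x * E * m))) atTop (𝓝 1) := by
  have hℓ := tendsto_log_atTop
  have h₁ := (tendsto_log_div_log_zpow_div_div_log hD 2).inv₀ one_ne_zero
  have h₂ : Tendsto (fun x => |log x| ^ (1 : ℝ) * exp (-(E * m) * log x ^ 2) / m) atTop (𝓝 0) := by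
    simpa using (((tendsto_rpow_abs_mul_exp_neg_mul_sq_cocompact (mul_pos hE hm) 1).mono_left
      atTop_le_cocompact).comp hℓ).div_const m
  have h := h₁.add h₂
  rw [inv_one, add_zero] at h
  refine h.congr' ?_
  filter_upwards [eventually_gt_atTop 0, hℓ.eventually_gt_atTop 0] with x hx hℓx
  simp only [abs_of_pos hℓx, rpow_one, zpow_ofNat, inv_div]
  field_simp

end Asymptotics

theorem tendsto_mul_mul_log_mul_integral_exp_neg_mul_mul_log_div {E D t₁ : ℝ} (hE : 0 < E)
    (ht₁ : 0 < t₁) (ht₁D : t₁ < D) :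
    Tendsto (fun x : ℝ => E * x * log x *
      ∫ t in (0 : ℝ)..t₁, exp (-(x * E * t * log (D / t)))) atTop (𝓝 1) := by
  have hD : 0 < D := ht₁.trans ht₁D
  have hℓ := tendsto_log_atTop
  have hc : Tendsto (fun x => log x ^ (-2 : ℤ) / x) atTop (𝓝 0) := by
    refine (tendsto_inv_atTop_zero.comp
      (tendsto_id.atTop_mul_atTop₀ ((tendsto_pow_atTop two_ne_zero).comp hℓ))).congr' ?_
    filter_upwards [eventually_gt_atTop 0] with x hx
    simp only [Function.comp_apply, id, zpow_neg, zpow_ofNat]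
    field_simp
  have hd : Tendsto (fun x => log x ^ (2 : ℤ) / x) atTop (𝓝 0) := by
    simpa using tendsto_pow_log_div_mul_add_atTop 1 0 2 one_ne_zero
  have hxc : Tendsto (fun x => x * log x * (log x ^ (-2 : ℤ) / x)) atTop (𝓝 0) := by
    refine (tendsto_inv_atTop_zero.comp hℓ).congr' ?_
    filter_upwards [eventually_gt_atTop 0] with x hx
    simp only [Function.comp_apply, zpow_neg, zpow_ofNat]
    field_simp
  have hlower := tendsto_mul_log_mul_exp_sub_exp_div hE ht₁
    (tendsto_log_div_log_zpow_div_div_log hD (-2)) hxc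
  have hupper := tendsto_mul_log_mul_inv_add_exp_div hE hD (log_pos ((one_lt_div ht₁).2 ht₁D))
  refine tendsto_of_tendsto_of_tendsto_of_le_of_le' hlower hupper ?_ ?_ <;>
    filter_upwards [eventually_gt_atTop 0, hℓ.eventually_gt_atTop 0,
      hc.eventually_le_const ht₁, hd.eventually_le_const ht₁] with x hx hℓx hct hdt <;>
    refine mul_le_mul_of_nonneg_left ?_ (by positivity)
  · exact exp_sub_exp_div_le_integral_exp_neg_mul_mul_log_div (mul_pos hx hE) (by positivity) hct
      (hct.trans_lt ht₁D)
  · exact integral_exp_neg_mul_mul_log_div_le (mul_pos hx hE) (by positivity) hdt ht₁D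

theorem laplace_integral_asymptotic_general (E D t₁ : ℝ) (hE : 0 < E)
    (ht₁ : 0 < t₁) (ht₁D : t₁ < D / 3) :
    Tendsto (fun n : ℕ =>
        E * (n : ℝ) * Real.log n *
          ∫ t in (0 : ℝ)..t₁, Real.exp (-((n : ℝ) * E * t * Real.log (D / t))))
      atTop (nhds 1) :=
  (tendsto_mul_mul_log_mul_integral_exp_neg_mul_mul_log_div hE ht₁ (by linarith)).comp
    tendsto_natCast_atTop_atTop

/-- For constants `E, D > 0` and `0 < t₁ < D/3`, the Laplace-type integral
`I_n = ∫_0^{t₁} exp(−n·E·t·ln(D/t)) dt` satisfies `I_n ~ 1/(E·n·ln n)` as `n → ∞`,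
i.e. `E·n·ln(n)·I_n → 1`. -/
theorem laplace_integral_asymptotic (E D t₁ : ℝ) (hE : 0 < E) (hD : 0 < D)
    (ht₁ : 0 < t₁) (ht₁D : t₁ < D / 3) :
    Tendsto (fun n : ℕ =>
        E * (n : ℝ) * Real.log n *
          ∫ t in (0 : ℝ)..t₁, Real.exp (-((n : ℝ) * E * t * Real.log (D / t))))
      atTop (nhds 1) :=
  laplace_integral_asymptotic_general E D t₁ hE ht₁ ht₁D
end
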